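/- For every spherical convex body C ⊂ S^2 of diameter at most π/2, the diameter of the set of extreme points of C equals the diameter of C. -/

import Mathlib

open scoped RealInnerProductSpace
open Real

noncomputable section

/-- Points of the ambient Euclidean space `E^n`. -/
abbrev Pt (n : ℕ) := EuclideanSpace ℝ (Fin n)

/-- The unit sphere in `E^n`. -/
def uSphere (n : ℕ) : Set (Pt n) := {x | ‖x‖ = 1}

/-- Spherical (geodesic) distance between unit vectors. -/
def sdist {n : ℕ} (x y : Pt n) : ℝ := Real.arccos ⟪x, y⟫

/-- `z` lies on the shorter great-circle arc connecting `x` and `y`. -/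
def OnArc {n : ℕ} (x z y : Pt n) : Prop := sdist x z + sdist z y = sdist x y

/-- Spherical convexity: no pair of antipodes, and closed under shorter arcs. -/
def SphConvex {n : ℕ} (C : Set (Pt n)) : Prop :=
  C ⊆ uSphere n ∧ (∀ x ∈ C, -x ∉ C) ∧
    ∀ x ∈ C, ∀ y ∈ C, ∀ z ∈ uSphere n, OnArc x z y → z ∈ C

/-- Interior of a set relative to the unit sphere. -/
def sphInterior {n : ℕ} (C : Set (Pt n)) : Set (Pt n) :=
  {x | x ∈ C ∧ ∃ ε > 0, ∀ y ∈ uSphere n, sdist x y < ε → y ∈ C}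

/-- Boundary of a closed subset of the sphere. -/
def sphBoundary {n : ℕ} (C : Set (Pt n)) : Set (Pt n) := C \ sphInterior C

/-- A spherical convex body: closed, spherically convex, nonempty interior. -/
def SphConvexBody {n : ℕ} (C : Set (Pt n)) : Prop :=
  IsClosed C ∧ SphConvex C ∧ (sphInterior C).Nonempty

/-- Closed spherical ball of radius `ρ` centered at `c`. -/
def sBall {n : ℕ} (c : Pt n) (ρ : ℝ) : Set (Pt n) := {x | x ∈ uSphere n ∧ sdist c x ≤ ρ}

/-- Hemisphere with center `m`. -/
def Hemi {n : ℕ} (m : Pt n) : Set (Pt n) := sBall m (π/2)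

/-- `Hemi m` supports the body `C`. -/
def Supports {n : ℕ} (m : Pt n) (C : Set (Pt n)) : Prop :=
  ‖m‖ = 1 ∧ C ⊆ Hemi m ∧ ∃ p ∈ C, sdist m p = π/2

/-- `Hemi m` supports the body `C` at the point `p`. -/
def SupportsAt {n : ℕ} (m : Pt n) (C : Set (Pt n)) (p : Pt n) : Prop :=
  ‖m‖ = 1 ∧ C ⊆ Hemi m ∧ p ∈ C ∧ sdist m p = π/2

/-- The lune `Hemi g ∩ Hemi h`. -/
def Lune {n : ℕ} (g h : Pt n) : Set (Pt n) := Hemi g ∩ Hemi h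

/-- `g, h` determine a genuine lune. -/
def IsLune {n : ℕ} (g h : Pt n) : Prop := ‖g‖ = 1 ∧ ‖h‖ = 1 ∧ g ≠ h ∧ g ≠ -h

/-- Center of the `(d-1)`-dimensional hemisphere `G/H` bounding the lune
`Hemi g ∩ Hemi h` and contained in `Hemi g` (i.e. on the great sphere `bd (Hemi g)`). -/
def cGH {n : ℕ} (g h : Pt n) : Pt n :=
  (‖h - ⟪g, h⟫ • g‖)⁻¹ • (h - ⟪g, h⟫ • g)

/-- Thickness of the lune `Hemi g ∩ Hemi h`: distance of the centers of the two
bounding `(d-1)`-dimensional hemispheres. -/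
def luneThickness {n : ℕ} (g h : Pt n) : ℝ := sdist (cGH g h) (cGH h g)

/-- Width of `C` determined by the supporting hemisphere `Hemi k`. -/
def widthAt {n : ℕ} (k : Pt n) (C : Set (Pt n)) : ℝ :=
  sInf {t | ∃ k', Supports k' C ∧ t = luneThickness k k'}

/-- Thickness (minimal width) of a spherical convex body. -/
def thickness {n : ℕ} (C : Set (Pt n)) : ℝ :=
  sInf {t | ∃ k, Supports k C ∧ t = widthAt k C}

/-- A reduced spherical convex body. -/
def Reduced {n : ℕ} (R : Set (Pt n)) : Prop :=
  SphConvexBody R ∧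
    ∀ C : Set (Pt n), SphConvexBody C → C ⊆ R → C ≠ R → thickness C < thickness R

/-- A spherical convex body of constant width `w`. -/
def ConstWidth {n : ℕ} (W : Set (Pt n)) (w : ℝ) : Prop :=
  SphConvexBody W ∧ ∀ k, Supports k W → widthAt k W = w

/-- Smoothness: a unique supporting hemisphere at every boundary point. -/
def SphSmooth {n : ℕ} (C : Set (Pt n)) : Prop :=
  ∀ p ∈ sphBoundary C, ∃! m, SupportsAt m C p

/-- Strict convexity: the boundary contains no nondegenerate arc. -/
def StrictlyConvexBody {n : ℕ} (C : Set (Pt n)) : Prop :=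
  ∀ x ∈ sphBoundary C, ∀ y ∈ sphBoundary C, x ≠ y →
    ∃ z ∈ uSphere n, OnArc x z y ∧ z ∉ sphBoundary C

/-- Spherical diameter of a set. -/
def sdiam {n : ℕ} (C : Set (Pt n)) : ℝ := sSup {t | ∃ x ∈ C, ∃ y ∈ C, t = sdist x y}

/-- Spherical convex hull: smallest spherically convex set containing `A`. -/
def sphConvHull {n : ℕ} (A : Set (Pt n)) : Set (Pt n) := ⋂₀ {C | SphConvex C ∧ A ⊆ C}

/-- `e` is an extreme point of the convex body `C`. -/
def ExtremePt {n : ℕ} (C : Set (Pt n)) (e : Pt n) : Prop := e ∈ C ∧ SphConvex (C \ {e})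

/-- `Q` is a quarter of a disk of radius `r`: intersection of a ball `sBall c r` with
two hemispheres whose bounding great circles pass through `c` and are orthogonal at `c`. -/
def IsQuarterDisk {n : ℕ} (Q : Set (Pt n)) (r : ℝ) : Prop :=
  ∃ c g h : Pt n, ‖c‖ = 1 ∧ ‖g‖ = 1 ∧ ‖h‖ = 1 ∧ ⟪g, c⟫ = 0 ∧ ⟪h, c⟫ = 0 ∧
    ⟪g, h⟫ = 0 ∧ Q = sBall c r ∩ Hemi g ∩ Hemi h

/-- A spherical polygon: a convex body whose boundary is a finite union of arcs. -/
def IsPolygon {n : ℕ} (V : Set (Pt n)) : Prop :=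
  SphConvexBody V ∧ ∃ F : Finset (Pt n × Pt n),
    sphBoundary V = ⋃ p ∈ F, {z | z ∈ uSphere n ∧ OnArc p.1 z p.2}

/-- A body of constant diameter `w`. -/
def ConstDiameter {n : ℕ} (W : Set (Pt n)) (w : ℝ) : Prop :=
  SphConvexBody W ∧ sdiam W = w ∧ ∀ p ∈ sphBoundary W, ∃ p' ∈ W, sdist p p' = w

/-!
Let `x, y` realize the diameter `D` of `C`. If `D < π/2`, then `y` minimizes `⟪x, ·⟫` on `C`
with positive minimum `cos D`. By the sine rule, `sin |ab| • z = sin |zb| • a + sin |az| • b`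
for `z` on the arc `ab`, and `sin |ab| < sin |zb| + sin |az|` when `z ≠ a, b`; so a minimizer
with positive value lies inside no arc of `C`, and both `x` and `y` are extreme.
If `D = π/2`, all inner products on `C` are nonnegative. Minimizing `⟪x, ·⟫` on the face
`C ∩ y^⊥` yields an extreme point `e₁`, and minimizing `⟪y, ·⟫` on `C ∩ e₁^⊥` an extreme point
`e₂ ⊥ e₁`; these are at distance `π/2`.
-/

section SphericalDistance

variable {n : ℕ}

lemma sdist_comm (x y : Pt n) : sdist x y = sdist y x := by
  rw [sdist, sdist, real_inner_comm]

lemma sdist_nonneg (x y : Pt n) : 0 ≤ sdist x y := arccos_nonneg _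

lemma sdist_le_pi (x y : Pt n) : sdist x y ≤ π := arccos_le_pi _

lemma cos_sdist {x y : Pt n} (hx : ‖x‖ = 1) (hy : ‖y‖ = 1) : cos (sdist x y) = ⟪x, y⟫ := by
  have h := abs_real_inner_le_norm x y
  rw [hx, hy, one_mul] at h
  exact cos_arccos (abs_le.mp h).1 (abs_le.mp h).2

lemma sdist_eq_zero_iff {x y : Pt n} (hx : ‖x‖ = 1) (hy : ‖y‖ = 1) :
    sdist x y = 0 ↔ x = y := by
  have h := real_inner_le_norm x y
  rw [hx, hy, one_mul] at h
  rw [sdist, arccos_eq_zero, ← inner_eq_one_iff_of_norm_eq_one (𝕜 := ℝ) hx hy]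
  constructor <;> intro h' <;> linarith

lemma sdist_pos {x y : Pt n} (hx : ‖x‖ = 1) (hy : ‖y‖ = 1) (hxy : x ≠ y) : 0 < sdist x y :=
  (sdist_nonneg x y).lt_of_ne' fun h => hxy ((sdist_eq_zero_iff hx hy).mp h)

lemma eq_of_onArc_self {a z : Pt n} (ha : ‖a‖ = 1) (hz : ‖z‖ = 1) (harc : OnArc a z a) :
    z = a := by
  by_contra hza
  have h := (sdist_eq_zero_iff ha ha).mpr rfl
  linarith [sdist_pos ha hz (Ne.symm hza), sdist_nonneg z a, harc.trans h]

lemma sin_sdist_smul_of_onArc {a z b : Pt n} (ha : ‖a‖ = 1) (hz : ‖z‖ = 1) (hb : ‖b‖ = 1)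
    (harc : OnArc a z b) :
    sin (sdist a b) • z = sin (sdist z b) • a + sin (sdist a z) • b := by
  set α := sdist a z
  set β := sdist z b
  have hab : ⟪a, b⟫ = cos (α + β) := by rw [harc, cos_sdist ha hb]
  have haz : ⟪a, z⟫ = cos α := (cos_sdist ha hz).symm
  have hzb : ⟪z, b⟫ = cos β := (cos_sdist hz hb).symm
  have hunit {x : Pt n} (hx : ‖x‖ = 1) : ⟪x, x⟫ = 1 := by simp [hx]
  rw [← harc, ← sub_eq_zero, ← inner_self_eq_zero (𝕜 := ℝ)]
  simp only [inner_sub_left, inner_sub_right, inner_add_left, inner_add_right,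
    real_inner_smul_left, real_inner_smul_right, hunit ha, hunit hb, hunit hz,
    real_inner_comm a, real_inner_comm z b, hab, haz, hzb, sin_add, cos_add]
  linear_combination -sin α ^ 2 * sin_sq_add_cos_sq β - sin β ^ 2 * sin_sq_add_cos_sq α

end SphericalDistance

lemma sin_add_lt_sin_add_sin {α β : ℝ} (hα : 0 < α) (hβ : 0 < β) (hαβ : α + β ≤ π) :
    sin (α + β) < sin α + sin β := by
  have hsα : 0 < sin α := sin_pos_of_pos_of_lt_pi hα (by linarith)
  have hsβ : 0 < sin β := sin_pos_of_pos_of_lt_pi hβ (by linarith)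
  have hcβ : cos β < 1 := by
    simpa using cos_lt_cos_of_nonneg_of_le_pi le_rfl (by linarith) hβ
  rw [sin_add]
  nlinarith [cos_le_one α]

lemma inner_eq_zero_of_onArc_of_le {n : ℕ} {a z b y : Pt n} (ha : ‖a‖ = 1) (hz : ‖z‖ = 1)
    (hb : ‖b‖ = 1) (harc : OnArc a z b) (hza : z ≠ a) (hzb : z ≠ b) (hz0 : 0 ≤ ⟪y, z⟫)
    (hya : ⟪y, z⟫ ≤ ⟪y, a⟫) (hyb : ⟪y, z⟫ ≤ ⟪y, b⟫) : ⟪y, a⟫ = 0 ∧ ⟪y, b⟫ = 0 := by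
  have hα := sdist_pos ha hz hza.symm
  have hβ := sdist_pos hz hb hzb
  have hαβ : sdist a z + sdist z b ≤ π := harc.trans_le (sdist_le_pi a b)
  have hsα : 0 < sin (sdist a z) := sin_pos_of_pos_of_lt_pi hα (by linarith)
  have hsβ : 0 < sin (sdist z b) := sin_pos_of_pos_of_lt_pi hβ (by linarith)
  have hlt := sin_add_lt_sin_add_sin hα hβ hαβ
  have hcomb := congrArg (⟪y, ·⟫) (sin_sdist_smul_of_onArc ha hz hb harc)
  simp only [inner_add_right, real_inner_smul_right] at hcomb
  rw [← show sdist a z + sdist z b = sdist a b from harc] at hcomb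
  have hyz : ⟪y, z⟫ = 0 := by
    nlinarith [mul_le_mul_of_nonneg_left hya hsβ.le, mul_le_mul_of_nonneg_left hyb hsα.le]
  rw [hyz] at hya hyb hcomb
  constructor <;> nlinarith [mul_nonneg hsβ.le hya, mul_nonneg hsα.le hyb]

lemma eq_or_eq_neg_of_inner_eq_zero {u y a b : Pt 3} (hu : ‖u‖ = 1) (hy : ‖y‖ = 1)
    (ha : ‖a‖ = 1) (hb : ‖b‖ = 1) (huy : ⟪u, y⟫ = 0) (hua : ⟪u, a⟫ = 0) (hya : ⟪y, a⟫ = 0)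
    (hub : ⟪u, b⟫ = 0) (hyb : ⟪y, b⟫ = 0) : a = b ∨ a = -b := by
  have hon : Orthonormal ℝ ![u, y, a] := by
    simp [orthonormal_vecCons_iff, Fin.forall_fin_succ, hu, hy, ha, huy, hua, hya]
  let B := OrthonormalBasis.mk hon
    (hon.linearIndependent.span_eq_top_of_card_eq_finrank' (by simp)).ge
  have hab : ⟪a, b⟫ ^ 2 = 1 := by
    simpa [B, Fin.sum_univ_succ, hub, hyb, hb] using B.sum_sq_inner_right b
  rcases sq_eq_one_iff.mp hab with h | h
  · exact .inl ((inner_eq_one_iff_of_norm_eq_one ha hb).mp h)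
  · exact .inr ((inner_eq_neg_one_iff_of_norm_eq_one ha hb).mp h)

section Extreme

variable {n : ℕ} {C : Set (Pt n)}

lemma extremePt_of_forall_onArc (hC : SphConvex C) {e : Pt n} (he : e ∈ C)
    (h : ∀ a ∈ C, ∀ b ∈ C, OnArc a e b → e = a ∨ e = b) : ExtremePt C e := by
  refine ⟨he, fun x hx => hC.1 hx.1, fun x hx hnx => hC.2.1 x hx.1 hnx.1, ?_⟩
  intro a ha b hb z hz harc
  refine ⟨hC.2.2 a ha.1 b hb.1 z hz harc, ?_⟩
  rintro rfl
  rcases h a ha.1 b hb.1 harc with rfl | rfl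
  exacts [ha.2 rfl, hb.2 rfl]

lemma extremePt_of_isMinOn_of_pos (hC : SphConvex C) {y e : Pt n} (he : e ∈ C)
    (hmin : IsMinOn (⟪y, ·⟫) C e) (hpos : 0 < ⟪y, e⟫) : ExtremePt C e := by
  refine extremePt_of_forall_onArc hC he fun a ha b hb harc => ?_
  by_contra! hne
  have hea : ⟪y, e⟫ ≤ ⟪y, a⟫ := hmin ha
  have hya := (inner_eq_zero_of_onArc_of_le (hC.1 ha) (hC.1 he) (hC.1 hb) harc hne.1 hne.2
    hpos.le hea (hmin hb)).1
  linarith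

end Extreme

/-- By minimality of `e`, first for `⟪y, ·⟫` and then for `⟪u, ·⟫`, both endpoints of an arc of
`C` through `e` are orthogonal to `u` and `y`; in `ℝ³` they are then equal or antipodal. -/
lemma extremePt_of_isMinOn_face {C : Set (Pt 3)} (hC : SphConvex C) {y u e : Pt 3}
    (hy : ‖y‖ = 1) (hu : ‖u‖ = 1) (huy : ⟪u, y⟫ = 0) (hyC : ∀ p ∈ C, 0 ≤ ⟪y, p⟫)
    (he : e ∈ {p ∈ C | ⟪y, p⟫ = 0}) (hmin : IsMinOn (⟪u, ·⟫) {p ∈ C | ⟪y, p⟫ = 0} e)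
    (hue : 0 ≤ ⟪u, e⟫) : ExtremePt C e := by
  refine extremePt_of_forall_onArc hC he.1 fun a ha b hb harc => ?_
  by_contra! hne
  obtain ⟨hya, hyb⟩ := inner_eq_zero_of_onArc_of_le (hC.1 ha) (hC.1 he.1) (hC.1 hb)
    harc hne.1 hne.2 he.2.ge (he.2 ▸ hyC a ha) (he.2 ▸ hyC b hb)
  obtain ⟨hua, hub⟩ := inner_eq_zero_of_onArc_of_le (hC.1 ha) (hC.1 he.1) (hC.1 hb)
    harc hne.1 hne.2 hue (hmin ⟨ha, hya⟩) (hmin ⟨hb, hyb⟩)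
  rcases eq_or_eq_neg_of_inner_eq_zero hu hy (hC.1 ha) (hC.1 hb) huy hua hya hub hyb
    with rfl | rfl
  · exact hne.1 (eq_of_onArc_self (hC.1 ha) (hC.1 he.1) harc)
  · exact hC.2.1 b hb ha

lemma exists_extremePt_inner_eq_zero {C : Set (Pt 3)} (hC : SphConvex C) (hCc : IsCompact C)
    {y u : Pt 3} (hy : ‖y‖ = 1) (hyC : ∀ p ∈ C, 0 ≤ ⟪y, p⟫) (hu : u ∈ C) (huy : ⟪u, y⟫ = 0)
    (huC : ∀ p ∈ C, 0 ≤ ⟪u, p⟫) : ∃ e, ExtremePt C e ∧ ⟪y, e⟫ = 0 := by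
  have hF : IsCompact {p ∈ C | ⟪y, p⟫ = 0} :=
    hCc.inter_right (isClosed_eq (by fun_prop) continuous_const)
  obtain ⟨e, he, hmin⟩ := hF.exists_isMinOn ⟨u, hu, real_inner_comm u y ▸ huy⟩
    (f := (⟪u, ·⟫)) (by fun_prop)
  exact ⟨e, extremePt_of_isMinOn_face hC hy (hC.1 hu) huy hyC he hmin (huC e he.1), he.2⟩

section Diameter

variable {n : ℕ}

lemma sdist_le_sdiam {A : Set (Pt n)} {x y : Pt n} (hx : x ∈ A) (hy : y ∈ A) :
    sdist x y ≤ sdiam A :=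
  le_csSup ⟨π, by rintro _ ⟨x, -, y, -, rfl⟩; exact sdist_le_pi x y⟩ ⟨x, hx, y, hy, rfl⟩

lemma sdiam_mono {A B : Set (Pt n)} (h : A ⊆ B) : sdiam A ≤ sdiam B :=
  Real.sSup_le (by rintro _ ⟨x, hx, y, hy, rfl⟩; exact sdist_le_sdiam (h hx) (h hy))
    (Real.sSup_nonneg (by rintro _ ⟨x, -, y, -, rfl⟩; exact sdist_nonneg x y))

lemma exists_sdist_eq_sdiam {A : Set (Pt n)} (hA : IsCompact A) (hne : A.Nonempty) :
    ∃ x ∈ A, ∃ y ∈ A, sdist x y = sdiam A := by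
  have himage : {t | ∃ x ∈ A, ∃ y ∈ A, t = sdist x y} =
      (fun p : Pt n × Pt n => sdist p.1 p.2) '' (A ×ˢ A) := by
    ext; simp [eq_comm]
  obtain ⟨x, hx⟩ := hne
  obtain ⟨x, hx, y, hy, h⟩ : sSup {t | ∃ x ∈ A, ∃ y ∈ A, t = sdist x y} ∈ _ :=
    (himage ▸ (hA.prod hA).image (by unfold sdist; fun_prop)).sSup_mem ⟨_, x, hx, x, hx, rfl⟩
  exact ⟨x, hx, y, hy, h.symm⟩

lemma extremePt_of_sdist_eq_sdiam {C : Set (Pt n)} (hC : SphConvex C) (hlt : sdiam C < π / 2)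
    {x y : Pt n} (hx : x ∈ C) (hy : y ∈ C) (hxy : sdist x y = sdiam C) : ExtremePt C y := by
  refine extremePt_of_isMinOn_of_pos hC hy (y := x) (fun p hp => ?_) ?_
  · show ⟪x, y⟫ ≤ ⟪x, p⟫
    rw [← cos_sdist (hC.1 hx) (hC.1 hy), ← cos_sdist (hC.1 hx) (hC.1 hp), hxy]
    exact cos_le_cos_of_nonneg_of_le_pi (sdist_nonneg x p) (by linarith [pi_pos])
      (sdist_le_sdiam hx hp)
  · rw [← cos_sdist (hC.1 hx) (hC.1 hy), hxy]
    exact cos_pos_of_mem_Ioo ⟨by linarith [hxy ▸ sdist_nonneg x y, pi_pos], hlt⟩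

end Diameter

theorem diam_extreme_points_eq (C : Set (Pt 3)) (hC : SphConvexBody C)
    (h : sdiam C ≤ π/2) : sdiam {e | ExtremePt C e} = sdiam C := by
  obtain ⟨hclosed, hconv, hint⟩ := hC
  have hcpt : IsCompact C := (isCompact_sphere 0 1).of_isClosed_subset hclosed
    fun x hx => mem_sphere_zero_iff_norm.mpr (hconv.1 hx)
  obtain ⟨x, hx, y, hy, hxy⟩ := exists_sdist_eq_sdiam hcpt ⟨_, hint.some_mem.1⟩
  obtain ⟨e₁, he₁, e₂, he₂, he⟩ :
      ∃ e₁, ExtremePt C e₁ ∧ ∃ e₂, ExtremePt C e₂ ∧ sdist e₁ e₂ = sdiam C := by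
    rcases h.lt_or_eq with hlt | heq
    · exact ⟨x, extremePt_of_sdist_eq_sdiam hconv hlt hy hx (sdist_comm y x ▸ hxy),
        y, extremePt_of_sdist_eq_sdiam hconv hlt hx hy hxy, hxy⟩
    · have hnn : ∀ p ∈ C, ∀ q ∈ C, 0 ≤ ⟪p, q⟫ := fun p hp q hq =>
        arccos_le_pi_div_two.mp (heq ▸ sdist_le_sdiam hp hq)
      have hxy₀ : ⟪x, y⟫ = 0 := arccos_eq_pi_div_two.mp (hxy.trans heq)
      obtain ⟨e₁, he₁, hye₁⟩ :=
        exists_extremePt_inner_eq_zero hconv hcpt (hconv.1 hy) (hnn y hy) hx hxy₀ (hnn x hx)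
      obtain ⟨e₂, he₂, he₁₂⟩ := exists_extremePt_inner_eq_zero hconv hcpt (hconv.1 he₁.1)
        (hnn e₁ he₁.1) hy (real_inner_comm y e₁ ▸ hye₁) (hnn y hy)
      exact ⟨e₁, he₁, e₂, he₂, by rw [sdist, he₁₂, arccos_zero, heq]⟩
  exact le_antisymm (sdiam_mono fun e he => he.1) (he ▸ sdist_le_sdiam he₁ he₂)
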